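/- The kernel of the ℂ-algebra homomorphism from the polynomial ring ℂ[T₄,T₆,T₈,T₁₀,S₁₀,T₁₂] to R determined by T₄ ↦ t₄, T₆ ↦ t₆, T₈ ↦ t₈, T₁₀ ↦ t₁₀, S₁₀ ↦ s₁₀, T₁₂ ↦ t₁₂ is the principal ideal generated by the single element S₁₀² − (T₁₀² − 4T₈T₁₂). -/

import Mathlib

open MvPolynomial

noncomputable def t4 : MvPolynomial (Fin 6) ℂ := X 1
noncomputable def t6 : MvPolynomial (Fin 6) ℂ := X 4
noncomputable def t8 : MvPolynomial (Fin 6) ℂ := X 0 * X 2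
noncomputable def t10 : MvPolynomial (Fin 6) ℂ := X 0 * X 5 + X 2 * X 3
noncomputable def s10 : MvPolynomial (Fin 6) ℂ := X 0 * X 5 - X 2 * X 3
noncomputable def t12 : MvPolynomial (Fin 6) ℂ := X 3 * X 5

/-- The ℂ-algebra homomorphism `ℂ[T₄,T₆,T₈,T₁₀,S₁₀,T₁₂] → R` sending
`T₄ ↦ t₄, T₆ ↦ t₆, T₈ ↦ t₈, T₁₀ ↦ t₁₀, S₁₀ ↦ s₁₀, T₁₂ ↦ t₁₂`
(variable indices `0,1,2,3,4,5` correspond to `T₄,T₆,T₈,T₁₀,S₁₀,T₁₂`). -/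
noncomputable def phi : MvPolynomial (Fin 6) ℂ →ₐ[ℂ] MvPolynomial (Fin 6) ℂ :=
  aeval ![t4, t6, t8, t10, s10, t12]

/-!
Substituting `T₁₀ = A + B`, `S₁₀ = A - B` turns `φ` into the monomial map
`T₄ ↦ u₂, T₆ ↦ u₅, T₈ ↦ u₁u₃, A ↦ u₁u₆, B ↦ u₃u₄, T₁₂ ↦ u₄u₆`, under which the
relation becomes `T₈T₁₂ - AB`, up to the unit `1/4`. Modulo `T₈T₁₂ - AB` every monomial
can be rewritten, by trading `T₈T₁₂` for `AB` as long as possible, into one not divisible by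
`T₈T₁₂`; the monomial map is injective on such monomials, so a polynomial in its kernel
reduces to zero.
-/

namespace MvPolynomial

section CommSemiring

variable {R σ : Type*} [CommSemiring R]

theorem X_mul_X_eq_monomial (i j : σ) :
    (X i * X j : MvPolynomial σ R) = monomial (.single i 1 + .single j 1) 1 := by
  rw [X, X, monomial_mul, mul_one]

variable (R) in
theorem C_invOf_two_mul_two [Invertible (2 : R)] : (C ⅟2 : MvPolynomial σ R) * 2 = 1 := by
  rw [← map_ofNat C 2, ← C_mul, invOf_mul_self, C_1]

end CommSemiring

variable {R σ τ : Type*} [CommRing R]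

theorem monomial_nsmul_add_sub_mem_span (m m' b : σ →₀ ℕ) (k : ℕ) :
    monomial (k • m + b) (1 : R) - monomial (k • m' + b) 1 ∈
      Ideal.span {monomial m (1 : R) - monomial m' 1} := by
  have hpow : ∀ n : σ →₀ ℕ, monomial (k • n + b) (1 : R) = monomial n 1 ^ k * monomial b 1 := by
    intro n
    rw [monomial_pow, monomial_mul, one_pow, mul_one]
  rw [hpow, hpow, ← sub_mul]
  exact Ideal.mul_mem_right _ _ (Ideal.mem_span_singleton.2 (sub_dvd_pow_sub_pow _ _ k))

theorem ker_mapDomainRingHom_le_of_exists_normalForm (A : (σ →₀ ℕ) →+ (τ →₀ ℕ))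
    (S : Set (σ →₀ ℕ)) (I : Ideal (MvPolynomial σ R)) (hS : Set.InjOn A S)
    (hnf : ∀ e, ∃ e' ∈ S, A e' = A e ∧ monomial e (1 : R) - monomial e' 1 ∈ I) :
    RingHom.ker (AddMonoidAlgebra.mapDomainRingHom R A :
      MvPolynomial σ R →+* MvPolynomial τ R) ≤ I := by
  choose nf hnfS hnfA hnfI using hnf
  have sub_nf_mem : ∀ p : MvPolynomial σ R, p - AddMonoidAlgebra.mapDomain nf p ∈ I := by
    intro p
    induction p using AddMonoidAlgebra.induction_linear with
    | zero => simp
    | add p q hp hq =>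
      rw [AddMonoidAlgebra.mapDomain_add, add_sub_add_comm]
      exact add_mem hp hq
    | single e c =>
      rw [AddMonoidAlgebra.mapDomain_single, single_eq_monomial, single_eq_monomial,
        ← mul_one c, ← C_mul_monomial, ← C_mul_monomial, ← mul_sub]
      exact I.mul_mem_left _ (hnfI e)
  classical
  intro p hp
  have hA : Finsupp.mapDomain A (AddMonoidAlgebra.mapDomain nf p).coeff =
      Finsupp.mapDomain A 0 := by
    rw [AddMonoidAlgebra.coeff_mapDomain, ← Finsupp.mapDomain_comp,
      show ⇑A ∘ nf = A from _root_.funext hnfA, Finsupp.mapDomain_zero]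
    exact congrArg AddMonoidAlgebra.coeff hp
  have hnf_zero : AddMonoidAlgebra.mapDomain nf p = 0 := by
    refine AddMonoidAlgebra.coeff_injective (Finsupp.mapDomain_injOn S hS ?_ ?_ hA)
    · intro e he
      obtain ⟨e', -, rfl⟩ := Finset.mem_image.1 (Finsupp.mapDomain_support he)
      exact hnfS e'
    · simp
  simpa [hnf_zero] using sub_nf_mem p

end MvPolynomial

/-- Variable `j` of the target stands for `u_{j+1}`; variables `3` and `4` of the source stand
for `A` and `B`. -/
noncomputable def monomialExp : Fin 6 → Fin 6 →₀ ℕ :=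
  ![.single 1 1, .single 4 1, .single 0 1 + .single 2 1, .single 0 1 + .single 5 1,
    .single 2 1 + .single 3 1, .single 3 1 + .single 5 1]

noncomputable def monomialExpHom : (Fin 6 →₀ ℕ) →+ (Fin 6 →₀ ℕ) :=
  (Finsupp.linearCombination ℕ monomialExp).toAddMonoidHom

theorem monomialExp_two_add_five :
    monomialExp 2 + monomialExp 5 = monomialExp 3 + monomialExp 4 := by
  simp only [monomialExp, Matrix.cons_val]
  abel

theorem monomialExpHom_single (i : Fin 6) : monomialExpHom (.single i 1) = monomialExp i := by
  simp [monomialExpHom]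

theorem monomialExpHom_injOn : Set.InjOn monomialExpHom {e | e 2 = 0 ∨ e 5 = 0} := by
  intro e he f hf h
  have hcoord : e 2 + e 3 = f 2 + f 3 ∧ e 0 = f 0 ∧ e 2 + e 4 = f 2 + f 4 ∧
      e 4 + e 5 = f 4 + f 5 ∧ e 1 = f 1 ∧ e 3 + e 5 = f 3 + f 5 := by
    simpa [Fin.forall_fin_succ, monomialExpHom, monomialExp, Finsupp.linearCombination_apply,
      Finsupp.sum_fintype, Fin.sum_univ_six] using fun j => DFunLike.congr_fun h j
  simp only [Set.mem_ofPred_eq] at he hf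
  ext j
  fin_cases j <;> simp only [Fin.zero_eta, Fin.mk_one, Fin.reduceFinMk] <;> omega

section MonomialMap

variable {R : Type*}

variable (R) in
noncomputable def monomialMap [CommSemiring R] :
    MvPolynomial (Fin 6) R →ₐ[R] MvPolynomial (Fin 6) R :=
  AddMonoidAlgebra.mapDomainAlgHom R R monomialExpHom

theorem monomialMap_X [CommSemiring R] (i : Fin 6) :
    monomialMap R (X i) = monomial (monomialExp i) 1 := by
  rw [X, ← single_eq_monomial, monomialMap, AddMonoidAlgebra.mapDomainAlgHom_apply,
    AddMonoidAlgebra.mapDomain_single, monomialExpHom_single, single_eq_monomial]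

variable [CommRing R]

theorem exists_normalForm_monomialExpHom (e : Fin 6 →₀ ℕ) :
    ∃ e' ∈ {e : Fin 6 →₀ ℕ | e 2 = 0 ∨ e 5 = 0}, monomialExpHom e' = monomialExpHom e ∧
      monomial e (1 : R) - monomial e' 1 ∈ Ideal.span {X 2 * X 5 - X 3 * X 4} := by
  obtain ⟨b, hb⟩ : ∃ b, e = min (e 2) (e 5) • (.single 2 1 + .single 5 1) + b := by
    refine exists_add_of_le fun i => ?_
    fin_cases i <;> simp
  generalize hk : min (e 2) (e 5) = k at hb
  subst hb
  refine ⟨k • (.single 3 1 + .single 4 1) + b, ?_, ?_, ?_⟩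
  · simp only [Set.mem_ofPred_eq, Finsupp.coe_add, Finsupp.coe_smul, Pi.add_apply, Pi.smul_apply,
      Finsupp.single_apply, Fin.reduceEq, if_true, if_false, smul_eq_mul] at hk ⊢
    omega
  · have hrel : monomialExpHom (.single 3 1 + .single 4 1) =
        monomialExpHom (.single 2 1 + .single 5 1) := by
      simp only [map_add, monomialExpHom_single, monomialExp_two_add_five]
    rw [map_add, map_add, map_nsmul, map_nsmul, hrel]
  · rw [X_mul_X_eq_monomial, X_mul_X_eq_monomial]
    exact monomial_nsmul_add_sub_mem_span _ _ _ _

theorem ker_monomialMap :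
    RingHom.ker (monomialMap R : MvPolynomial (Fin 6) R →+* MvPolynomial (Fin 6) R) =
      Ideal.span {X 2 * X 5 - X 3 * X 4} := by
  refine le_antisymm (ker_mapDomainRingHom_le_of_exists_normalForm _ _ _
    monomialExpHom_injOn exists_normalForm_monomialExpHom) ?_
  rw [Ideal.span_le, Set.singleton_subset_iff, SetLike.mem_coe, RingHom.mem_ker,
    AlgHom.coe_toRingHom, map_sub, map_mul, map_mul, monomialMap_X, monomialMap_X,
    monomialMap_X, monomialMap_X, monomial_mul, monomial_mul, monomialExp_two_add_five, sub_self]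

end MonomialMap

section SumDiff

variable (R : Type*) [CommRing R] [Invertible (2 : R)]

noncomputable def sumDiffEquiv : MvPolynomial (Fin 6) R ≃ₐ[R] MvPolynomial (Fin 6) R :=
  AlgEquiv.ofAlgHom (aeval ![X 0, X 1, X 2, X 3 + X 4, X 3 - X 4, X 5])
    (aeval ![X 0, X 1, X 2, C ⅟2 * (X 3 + X 4), C ⅟2 * (X 3 - X 4), X 5])
    (by
      ext1 i
      fin_cases i <;> simp only [Fin.zero_eta, Fin.mk_one, Fin.reduceFinMk, AlgHom.coe_comp,
        Function.comp_apply, aeval_X, Matrix.cons_val, Matrix.cons_val_zero, Matrix.cons_val_one,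
        map_add, map_sub, map_mul, algHom_C, algebraMap_eq, AlgHom.coe_id, id_eq]
      · linear_combination X 3 * C_invOf_two_mul_two R
      · linear_combination X 4 * C_invOf_two_mul_two R)
    (by
      ext1 i
      fin_cases i <;> simp only [Fin.zero_eta, Fin.mk_one, Fin.reduceFinMk, AlgHom.coe_comp,
        Function.comp_apply, aeval_X, Matrix.cons_val, Matrix.cons_val_zero, Matrix.cons_val_one,
        map_add, map_sub, AlgHom.coe_id, id_eq]
      · linear_combination X 3 * C_invOf_two_mul_two R
      · linear_combination X 4 * C_invOf_two_mul_two R)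

theorem sumDiffEquiv_symm_binomial :
    (sumDiffEquiv R).symm (X 2 * X 5 - X 3 * X 4) =
      C ⅟2 ^ 2 * (X 4 ^ 2 - (X 3 ^ 2 - 4 * X 2 * X 5)) := by
  simp only [sumDiffEquiv, AlgEquiv.ofAlgHom_symm, AlgEquiv.ofAlgHom_apply, map_sub, map_mul,
    aeval_X, Matrix.cons_val]
  linear_combination (-X 2 * X 5 * (C ⅟2 * 2 + 1)) * C_invOf_two_mul_two R

end SumDiff

theorem phi_eq_monomialMap_comp :
    (phi : MvPolynomial (Fin 6) ℂ →+* MvPolynomial (Fin 6) ℂ) =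
      (monomialMap ℂ : MvPolynomial (Fin 6) ℂ →+* MvPolynomial (Fin 6) ℂ).comp
        ((sumDiffEquiv ℂ).toRingEquiv : MvPolynomial (Fin 6) ℂ →+* MvPolynomial (Fin 6) ℂ) := by
  suffices phi = (monomialMap ℂ).comp (sumDiffEquiv ℂ : MvPolynomial (Fin 6) ℂ →ₐ[ℂ] _) by
    rw [this]; rfl
  ext1 i
  fin_cases i <;>
    simp only [phi, sumDiffEquiv, AlgHom.coe_comp, AlgEquiv.coe_toAlgHom, Function.comp_apply,
      AlgEquiv.ofAlgHom_apply, aeval_X, Fin.zero_eta, Fin.mk_one, Fin.reduceFinMk, Matrix.cons_val,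
      Matrix.cons_val_zero, Matrix.cons_val_one, map_add, map_sub, monomialMap_X, monomialExp,
      t4, t6, t8, t10, s10, t12, X_mul_X_eq_monomial] <;> rfl

/-- The kernel of `φ` is the principal ideal generated by `S₁₀² − (T₁₀² − 4T₈T₁₂)`. -/
theorem kernel_of_phi :
    RingHom.ker (phi : MvPolynomial (Fin 6) ℂ →+* MvPolynomial (Fin 6) ℂ) =
      Ideal.span {(X 4) ^ 2 - ((X 3) ^ 2 - 4 * X 2 * X 5)} := by
  rw [phi_eq_monomialMap_comp, ← RingHom.comap_ker, ker_monomialMap, Ideal.comap_coe,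
    ← Ideal.map_symm, Ideal.map_span, Set.image_singleton]
  have hunit : IsUnit (C ⅟2 ^ 2 : MvPolynomial (Fin 6) ℂ) :=
    ((isUnit_of_invertible _).map C).pow 2
  exact (congrArg (Ideal.span {·}) (sumDiffEquiv_symm_binomial ℂ)).trans
    (Ideal.span_singleton_mul_left_unit hunit _)
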